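/- arXiv:2307.15553 — 5 statements merged into one kernel-verified Lean document; each statement's English description precedes it below -/
import Mathlib

section
/- There do not exist positive, non-decreasing, differentiable functions v, v_r : ℝ → ℝ such that lim_{r→-∞} v(r) = lim_{r→-∞} v'(r) = lim_{r→-∞} v_r'(r) = 0, and for all r, both (4 - v'(r)^2)/v(r)^2 - 3·v_r(r)^2/(4·v(r)^4) ≤ 0 and -v'(r)·v_r'(r)/(v(r)·v_r(r)) + v_r(r)^2/(4·v(r)^4) ≤ 0 hold. -/
open Filter


lemma mono_deriv_nonneg' {f : ℝ → ℝ} (hf : Monotone f) {x : ℝ}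
    (hd : DifferentiableAt ℝ f x) : 0 ≤ deriv f x := by
  have h := hd.hasDerivAt
  rw [hasDerivAt_iff_tendsto_slope] at h
  refine ge_of_tendsto h ?_
  filter_upwards [self_mem_nhdsWithin] with y hy
  rcases lt_or_gt_of_ne (hy : y ≠ x) with h' | h'
  · rw [slope_def_field]
    rw [div_nonneg_iff]
    exact Or.inr ⟨by simpa [sub_nonpos] using hf h'.le, by linarith⟩
  · rw [slope_def_field]
    exact div_nonneg (by simpa [sub_nonneg] using hf h'.le) (by linarith)

theorem stmt_4 :
    ¬ ∃ v vr : ℝ → ℝ,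
      (∀ r, 0 < v r) ∧ (∀ r, 0 < vr r) ∧
      Monotone v ∧ Monotone vr ∧
      Differentiable ℝ v ∧ Differentiable ℝ vr ∧
      Tendsto v atBot (nhds 0) ∧
      Tendsto (deriv v) atBot (nhds 0) ∧
      Tendsto (deriv vr) atBot (nhds 0) ∧
      (∀ r, (4 - (deriv v r) ^ 2) / (v r) ^ 2 - 3 * (vr r) ^ 2 / (4 * (v r) ^ 4) ≤ 0 ∧
        -(deriv v r * deriv vr r) / (v r * vr r) + (vr r) ^ 2 / (4 * (v r) ^ 4) ≤ 0) := by
  rintro ⟨v, vr, hv, hvr, hmv, hmvr, hdv, hdvr, -, hdvt, hdvrt, hineq⟩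
  have hprod : Tendsto (fun r => deriv v r * deriv vr r) atBot (nhds 0) := by
    simpa using hdvt.mul hdvrt
  have h1 : ∀ᶠ r in atBot, deriv v r < 1 := hdvt.eventually_lt_const one_pos
  have h2 : ∀ᶠ r in atBot, deriv v r * deriv vr r < 2 :=
    hprod.eventually_lt_const (by norm_num)
  obtain ⟨r, hr1, hr2⟩ := (h1.and h2).exists
  have hA := (hineq r).1
  have hB := (hineq r).2
  have hvd : 0 ≤ deriv v r := mono_deriv_nonneg' hmv (hdv r)
  have hvrd : 0 ≤ deriv vr r := mono_deriv_nonneg' hmvr (hdvr r)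
  have hv0 := hv r
  have hvr0 := hvr r
  have hA' : (4 - (deriv v r) ^ 2) * (4 * (v r) ^ 4) ≤ 3 * (vr r) ^ 2 * (v r) ^ 2 :=
    (div_le_div_iff₀ (by positivity) (by positivity)).mp (by linarith)
  rw [neg_div] at hB
  have hB' : (vr r) ^ 2 * (v r * vr r) ≤ deriv v r * deriv vr r * (4 * (v r) ^ 4) :=
    (div_le_div_iff₀ (by positivity) (by positivity)).mp (by linarith)
  -- from hA': 2 * v r ≤ vr r
  have hdsq : (deriv v r) ^ 2 ≤ 1 := by nlinarith
  have hsq : 4 * v r ^ 2 ≤ vr r ^ 2 := by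
    nlinarith [pow_pos hv0 2, pow_pos hv0 4,
      mul_nonneg (by linarith : (0:ℝ) ≤ 1 - (deriv v r) ^ 2) (pow_pos hv0 4).le]
  have hle : 2 * v r ≤ vr r := by
    nlinarith [hsq, (by linarith : (0:ℝ) < 2 * v r + vr r)]
  have hcube : 8 * v r ^ 3 ≤ vr r ^ 3 := by nlinarith [hle, hv0, hvr0]
  nlinarith [hB', mul_le_mul_of_nonneg_right hcube hv0.le,
    mul_lt_mul_of_pos_right hr2 (pow_pos hv0 4)]
end

section
/- Suppose v, v_r : ℝ → ℝ are positive functions with lim_{r→-∞} v'(r) = 0 and, for all r, (4 - v'(r)^2)/v(r)^2 ≤ 3·v_r(r)^2/(4·v(r)^4). If additionally lim_{r→-∞} v'(r)·v_r'(r) = 0 and v'(r)^2 ≤ 1 for r near -∞, then it is impossible that also 3·v_r(r)^2/(4·v(r)^4) ≤ 3·v'(r)·v_r'(r)/(v(r)·v_r(r)) for all r, since these force lim_{r→-∞} v_r(r)/v(r) to be both ≥ 1 and 0. -/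
open Filter

theorem stmt_5 (v vr : ℝ → ℝ)
    (hv : ∀ r, 0 < v r) (hvr : ∀ r, 0 < vr r)
    (hv' : Tendsto (deriv v) atBot (nhds 0))
    (h1 : ∀ r, (4 - (deriv v r) ^ 2) / (v r) ^ 2 ≤ 3 * (vr r) ^ 2 / (4 * (v r) ^ 4))
    (h2 : Tendsto (fun r => deriv v r * deriv vr r) atBot (nhds 0))
    (h3 : ∀ᶠ r in atBot, (deriv v r) ^ 2 ≤ 1) :
    ¬ (∀ r, 3 * (vr r) ^ 2 / (4 * (v r) ^ 4) ≤ 3 * (deriv v r * deriv vr r) / (v r * vr r)) := by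
  intro h4
  have hsmall : ∀ᶠ r in atBot, |deriv v r * deriv vr r - 0| < 1 := by
    have := Metric.tendsto_nhds.mp h2 1 one_pos
    simpa only [Real.dist_eq, sub_zero] using this
  obtain ⟨r, hp2, habs⟩ := (h3.and hsmall).exists
  set a := v r with ha'
  set b := vr r with hb'
  set p := deriv v r with hp'
  set q := deriv vr r with hq'
  have ha : 0 < a := hv r
  have hb : 0 < b := hvr r
  rw [sub_zero] at habs
  have hpq : p * q < 1 := lt_of_le_of_lt (le_abs_self _) habs
  have key1 : (4 - p ^ 2) * (4 * a ^ 4) ≤ 3 * b ^ 2 * a ^ 2 := by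
    have := h1 r
    rw [div_le_div_iff₀ (by positivity) (by positivity)] at this
    linarith
  have key2 : 3 * b ^ 2 * (a * b) ≤ 3 * (p * q) * (4 * a ^ 4) := by
    have := h4 r
    rw [div_le_div_iff₀ (by positivity) (by positivity)] at this
    linarith
  -- From key1 and p^2 ≤ 1 : b^2 ≥ 4 a^2
  have hb2 : 4 * a ^ 2 ≤ b ^ 2 := by nlinarith [sq_nonneg a, sq_nonneg (a*a)]
  -- From key2 and p*q < 1 : b^3 < 4 a^3
  have hb3 : b ^ 3 < 4 * a ^ 3 := by nlinarith [pow_pos ha 4, pow_pos ha 3]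
  -- But b ≥ 2a implies b^3 ≥ 8 a^3
  have h2a : 2 * a ≤ b := by nlinarith
  nlinarith [pow_pos ha 3]
end

section
/- For all real r ≠ 0, with h(r) = cosh(r), h_r(r) = cosh(2r), and v(r) = sinh(r), the expression -(v'h_r'/(v h_r)) - (-v^2/(4h^2h_r^2) + 3h^2/(4v^2h_r^2) - h_r^2/(4v^2h^2) - 1/(2v^2) - 1/(2h^2) + 1/(2h_r^2)) equals -1. -/
theorem stmt_8 (r : ℝ) (hr0 : r ≠ 0) :
    -((deriv Real.sinh r * deriv (fun s => Real.cosh (2 * s)) r) /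
        (Real.sinh r * Real.cosh (2 * r))) -
      (-((Real.sinh r) ^ 2) / (4 * (Real.cosh r) ^ 2 * (Real.cosh (2 * r)) ^ 2) +
        3 * (Real.cosh r) ^ 2 / (4 * (Real.sinh r) ^ 2 * (Real.cosh (2 * r)) ^ 2) -
        (Real.cosh (2 * r)) ^ 2 / (4 * (Real.sinh r) ^ 2 * (Real.cosh r) ^ 2) -
        1 / (2 * (Real.sinh r) ^ 2) - 1 / (2 * (Real.cosh r) ^ 2) +
        1 / (2 * (Real.cosh (2 * r)) ^ 2)) = -1 := by
  have hd1 : deriv Real.sinh r = Real.cosh r := Real.deriv_sinh ▸ rfl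
  have hd2 : deriv (fun s => Real.cosh (2 * s)) r = 2 * Real.sinh (2 * r) := by
    have h := ((Real.hasDerivAt_cosh (2 * r)).comp r
      ((hasDerivAt_id r).const_mul 2)).deriv
    simpa [mul_comm] using h
  have hs : Real.sinh r ≠ 0 := Real.sinh_ne_zero.mpr hr0
  have hsq : Real.cosh r ^ 2 = Real.sinh r ^ 2 + 1 := Real.cosh_sq r
  have h2 : Real.cosh (2 * r) = 1 + 2 * Real.sinh r ^ 2 := by
    rw [Real.cosh_two_mul, hsq]; ring
  have key : Real.cosh r * 2 * Real.sinh (2 * r) =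
      4 * Real.sinh r * (Real.sinh r ^ 2 + 1) := by
    rw [Real.sinh_two_mul]
    linear_combination (4 * Real.sinh r) * hsq
  rw [hd1, hd2, ← mul_assoc, key, h2]
  simp only [hsq]
  have hs2 : (1 : ℝ) + 2 * Real.sinh r ^ 2 ≠ 0 := by positivity
  have hs1 : Real.sinh r ^ 2 + 1 ≠ 0 := by positivity
  field_simp
  ring
end

section
/- For all real r ≠ 0, with h(r) = cosh(r), h_r(r) = cosh(2r), and v(r) = sinh(r), the expression -(h'h_r'/(h h_r)) - (3v^2/(4h^2h_r^2) - h^2/(4v^2h_r^2) - h_r^2/(4v^2h^2) + 1/(2v^2) + 1/(2h^2) + 1/(2h_r^2)) equals -1. -/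
theorem stmt_9 (r : ℝ) (hr0 : r ≠ 0) :
    -((deriv Real.cosh r * deriv (fun s => Real.cosh (2 * s)) r) /
        (Real.cosh r * Real.cosh (2 * r))) -
      (3 * (Real.sinh r) ^ 2 / (4 * (Real.cosh r) ^ 2 * (Real.cosh (2 * r)) ^ 2) -
        (Real.cosh r) ^ 2 / (4 * (Real.sinh r) ^ 2 * (Real.cosh (2 * r)) ^ 2) -
        (Real.cosh (2 * r)) ^ 2 / (4 * (Real.sinh r) ^ 2 * (Real.cosh r) ^ 2) +
        1 / (2 * (Real.sinh r) ^ 2) + 1 / (2 * (Real.cosh r) ^ 2) +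
        1 / (2 * (Real.cosh (2 * r)) ^ 2)) = -1 := by
  have hd : deriv (fun s => Real.cosh (2 * s)) r = 2 * Real.sinh (2 * r) := by
    rw [show (fun s => Real.cosh (2 * s)) = Real.cosh ∘ (fun s => 2 * s) from rfl,
      deriv_comp _ Real.differentiable_cosh.differentiableAt (by fun_prop)]
    simp [Real.deriv_cosh, mul_comm]
  rw [hd, Real.deriv_cosh]
  have hs : Real.sinh r ≠ 0 := Real.sinh_ne_zero.mpr hr0
  have hc : Real.cosh r ≠ 0 := (Real.cosh_pos r).ne'
  have hc2 : Real.cosh (2 * r) ≠ 0 := (Real.cosh_pos _).ne'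
  have hpy : Real.cosh r ^ 2 = Real.sinh r ^ 2 + 1 := Real.cosh_sq r
  have hfirst : Real.sinh r * (2 * Real.sinh (2 * r)) / (Real.cosh r * Real.cosh (2 * r))
      = 4 * Real.sinh r ^ 2 / Real.cosh (2 * r) := by
    rw [Real.sinh_two_mul]
    field_simp
    ring
  rw [hfirst, Real.cosh_two_mul, hpy]
  have hs2 : Real.sinh r ^ 2 ≠ 0 := pow_ne_zero _ hs
  have h1 : Real.sinh r ^ 2 + 1 ≠ 0 := by positivity
  have h2 : 2 * (Real.sinh r ^ 2 + 1) - 1 ≠ 0 := by nlinarith [sq_nonneg (Real.sinh r)]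
  field_simp
  ring
end

section
/- For all real r ≠ 0, with h(r) = cosh(r), h_r(r) = cosh(2r), and v(r) = sinh(r), one has -(1/4)·(h^2/(h_r^2 v^2) + h_r^2/(h^2 v^2) + v^2/(h^2 h_r^2) + 2/h^2 + 2/h_r^2 - 2/v^2) = -1. -/
theorem stmt_14 (r : ℝ) (hr0 : r ≠ 0) :
    -(1 / 4) * ((Real.cosh r) ^ 2 / ((Real.cosh (2 * r)) ^ 2 * (Real.sinh r) ^ 2) +
      (Real.cosh (2 * r)) ^ 2 / ((Real.cosh r) ^ 2 * (Real.sinh r) ^ 2) +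
      (Real.sinh r) ^ 2 / ((Real.cosh r) ^ 2 * (Real.cosh (2 * r)) ^ 2) +
      2 / (Real.cosh r) ^ 2 + 2 / (Real.cosh (2 * r)) ^ 2 -
      2 / (Real.sinh r) ^ 2) = -1 := by
  have hs : Real.sinh r ≠ 0 := Real.sinh_ne_zero.2 hr0
  have hc : Real.cosh r ≠ 0 := (Real.cosh_pos r).ne'
  have hc2 : Real.cosh (2 * r) ≠ 0 := (Real.cosh_pos _).ne'
  have h2 : Real.cosh (2 * r) = Real.cosh r ^ 2 + Real.sinh r ^ 2 := by
    rw [two_mul, Real.cosh_add]; ring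
  have hpyth : Real.cosh r ^ 2 = 1 + Real.sinh r ^ 2 := by
    have := Real.cosh_sq_sub_sinh_sq r; nlinarith
  rw [h2, hpyth] at *
  field_simp
  ring
end
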